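/- arXiv:math/0701134 — 6 statements merged into one kernel-verified Lean document; each statement's English description precedes it below -/
import Mathlib

section
/- For i = 0 and i = 1, the Hecke operators satisfy the quadratic relation (T_i − t_i)(T_i + 1) = 0 as K-linear operators on K(z). -/
noncomputable section

variable {K : Type*} [Field K]

/-- The rational function `r₀ = (z-c)(z-d)/(z²-q)`. -/
def r0fun (c d q : K) : RatFunc K :=
  (RatFunc.X - RatFunc.C c) * (RatFunc.X - RatFunc.C d) / (RatFunc.X ^ 2 - RatFunc.C q)

/-- The rational function `r₁ = (1-az)(1-bz)/(1-z²)`. -/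
def r1fun (a b : K) : RatFunc K :=
  (1 - RatFunc.C a * RatFunc.X) * (1 - RatFunc.C b * RatFunc.X) / (1 - RatFunc.X ^ 2)

/-- The affine Hecke algebra operator `T = t + r(s - 1)` acting on `K(z)`. -/
def heckeT (t : K) (r : RatFunc K) (s : RatFunc K → RatFunc K) (f : RatFunc K) : RatFunc K :=
  RatFunc.C t * f + r * (s f - f)

lemma aux_algebraMap_eq_aeval (p : Polynomial K) :
    algebraMap (Polynomial K) (RatFunc K) p = Polynomial.aeval RatFunc.X p := by
  calc algebraMap (Polynomial K) (RatFunc K) p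
      = (IsScalarTower.toAlgHom K (Polynomial K) (RatFunc K)) p := rfl
    _ = Polynomial.aeval ((IsScalarTower.toAlgHom K (Polynomial K) (RatFunc K)) Polynomial.X) p := by
        rw [Polynomial.aeval_algHom_apply, Polynomial.aeval_X_left_apply]
    _ = Polynomial.aeval RatFunc.X p := by
        rw [show (IsScalarTower.toAlgHom K (Polynomial K) (RatFunc K)) Polynomial.X = RatFunc.X from RatFunc.algebraMap_X]

lemma aux_s_C (s : RatFunc K ≃ₐ[K] RatFunc K) (t : K) : s (RatFunc.C t) = RatFunc.C t := by
  rw [← RatFunc.algebraMap_eq_C]; exact s.commutes t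

lemma aux_involutive (s : RatFunc K ≃ₐ[K] RatFunc K) (h : s (s RatFunc.X) = RatFunc.X)
    (f : RatFunc K) : s (s f) = f := by
  have hp : ∀ p : Polynomial K, s (s (algebraMap (Polynomial K) (RatFunc K) p)) =
      algebraMap (Polynomial K) (RatFunc K) p := by
    intro p
    rw [aux_algebraMap_eq_aeval, ← Polynomial.aeval_algHom_apply, ← Polynomial.aeval_algHom_apply, h]
  refine RatFunc.induction_on (P := fun x => s (s x) = x) f fun p q hq => ?_
  simp only [map_div₀, hp]

lemma hecke_key (t : K) (r : RatFunc K) (s : RatFunc K ≃ₐ[K] RatFunc K)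
    (hinv : ∀ f, s (s f) = f) (hr : s r = RatFunc.C t + 1 - r) (f : RatFunc K) :
    heckeT t r s (heckeT t r s f + f) - RatFunc.C t * (heckeT t r s f + f) = 0 := by
  simp only [heckeT, map_add, map_mul, map_sub, aux_s_C, hinv, hr]
  ring

/-- The Hecke operators `T₀, T₁` satisfy the quadratic relation `(T_i - t_i)(T_i + 1) = 0`
as `K`-linear operators on `K(z)`, for `i = 0` and `i = 1`. -/
theorem hecke_quadratic_relation [CharZero K] (a b c d q : K)
    (hq0 : q ≠ 0) (hq1 : ∀ k : ℕ, k ≠ 0 → q ^ k ≠ 1)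
    (s₀ s₁ : RatFunc K ≃ₐ[K] RatFunc K)
    (hs₀ : s₀ RatFunc.X = RatFunc.C q * RatFunc.X⁻¹)
    (hs₁ : s₁ RatFunc.X = RatFunc.X⁻¹) :
    (∀ f : RatFunc K,
        heckeT (-(c * d) / q) (r0fun c d q) s₀ (heckeT (-(c * d) / q) (r0fun c d q) s₀ f + f) -
          RatFunc.C (-(c * d) / q) * (heckeT (-(c * d) / q) (r0fun c d q) s₀ f + f) = 0) ∧
      (∀ f : RatFunc K,
        heckeT (-(a * b)) (r1fun a b) s₁ (heckeT (-(a * b)) (r1fun a b) s₁ f + f) -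
          RatFunc.C (-(a * b)) * (heckeT (-(a * b)) (r1fun a b) s₁ f + f) = 0) := by
  have hX : (RatFunc.X : RatFunc K) ≠ 0 := RatFunc.X_ne_zero
  have hCq : (RatFunc.C q : RatFunc K) ≠ 0 := by
    rw [← RatFunc.algebraMap_C]
    exact RatFunc.algebraMap_ne_zero (Polynomial.C_ne_zero.mpr hq0)
  have hd0 : (RatFunc.X : RatFunc K) ^ 2 - RatFunc.C q ≠ 0 := by
    rw [← RatFunc.algebraMap_C, ← RatFunc.algebraMap_X, ← map_pow, ← map_sub]
    exact RatFunc.algebraMap_ne_zero (Polynomial.X_pow_sub_C_ne_zero two_pos q)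
  have hd1 : (1 : RatFunc K) - RatFunc.X ^ 2 ≠ 0 := by
    have h1 : ((1 : Polynomial K) - Polynomial.X ^ 2) ≠ 0 := by
      intro h
      have := congrArg (fun p => Polynomial.coeff p 2) h
      simp [Polynomial.coeff_one] at this
    rw [← RatFunc.algebraMap_X, ← map_pow, ← map_one (algebraMap (Polynomial K) (RatFunc K)), ← map_sub]
    exact RatFunc.algebraMap_ne_zero h1
  have hinv₀ : ∀ f, s₀ (s₀ f) = f := by
    refine aux_involutive s₀ ?_
    rw [hs₀, map_mul, aux_s_C, map_inv₀, hs₀, mul_inv, inv_inv]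
    field_simp
  have hinv₁ : ∀ f, s₁ (s₁ f) = f := by
    refine aux_involutive s₁ ?_
    rw [hs₁, map_inv₀, hs₁, inv_inv]
  have hd0b : -(RatFunc.C q * RatFunc.X ^ 4) + RatFunc.C q ^ 2 * RatFunc.X ^ 2 ≠ 0 := by
    have : -(RatFunc.C q * RatFunc.X ^ 4) + RatFunc.C q ^ 2 * RatFunc.X ^ 2
        = RatFunc.C q * RatFunc.X ^ 2 * -(RatFunc.X ^ 2 - RatFunc.C q) := by ring
    rw [this]
    exact mul_ne_zero (mul_ne_zero hCq (pow_ne_zero 2 hX)) (neg_ne_zero.mpr hd0)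
  have hd1b : -RatFunc.X ^ 2 + RatFunc.X ^ 4 ≠ (0 : RatFunc K) := by
    have : -RatFunc.X ^ 2 + RatFunc.X ^ 4 = RatFunc.X ^ 2 * -((1 : RatFunc K) - RatFunc.X ^ 2) := by ring
    rw [this]
    exact mul_ne_zero (pow_ne_zero 2 hX) (neg_ne_zero.mpr hd1)
  have hXi : (RatFunc.X⁻¹ : RatFunc K) ≠ 0 := inv_ne_zero hX
  have hXi2 : (RatFunc.X⁻¹ : RatFunc K) ^ 2 ≠ 0 := pow_ne_zero 2 hXi
  have h2 : (RatFunc.X⁻¹ : RatFunc K) * RatFunc.X = 1 := inv_mul_cancel₀ hX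
  have hd0' : RatFunc.C q ^ 2 - RatFunc.C q * RatFunc.X ^ 2 ≠ 0 := by
    have : RatFunc.C q ^ 2 - RatFunc.C q * RatFunc.X ^ 2
        = RatFunc.C q * -(RatFunc.X ^ 2 - RatFunc.C q) := by ring
    rw [this]
    exact mul_ne_zero hCq (neg_ne_zero.mpr hd0)
  have hr₀ : s₀ (r0fun c d q) = RatFunc.C (-(c * d) / q) + 1 - r0fun c d q := by
    rw [r0fun, map_div₀]
    simp only [map_sub, map_mul, map_pow, map_neg, map_div₀, aux_s_C, hs₀]
    have hnum : (RatFunc.C q * RatFunc.X⁻¹ - RatFunc.C c) * (RatFunc.C q * RatFunc.X⁻¹ - RatFunc.C d)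
        = RatFunc.X⁻¹ ^ 2 *
          ((RatFunc.C q - RatFunc.C c * RatFunc.X) * (RatFunc.C q - RatFunc.C d * RatFunc.X)) := by
      linear_combination (RatFunc.C q * (RatFunc.C c + RatFunc.C d) * RatFunc.X⁻¹
        - RatFunc.C c * RatFunc.C d * (RatFunc.X⁻¹ * RatFunc.X + 1)) * h2
    have hden : (RatFunc.C q * RatFunc.X⁻¹) ^ 2 - RatFunc.C q
        = RatFunc.X⁻¹ ^ 2 * (RatFunc.C q ^ 2 - RatFunc.C q * RatFunc.X ^ 2) := by
      linear_combination (RatFunc.C q * (RatFunc.X⁻¹ * RatFunc.X + 1)) * h2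
    rw [hnum, hden, mul_div_mul_left _ _ hXi2]
    have hd0'' : RatFunc.C q - (RatFunc.X : RatFunc K) ^ 2 ≠ 0 := fun h => hd0 (by linear_combination -h)
    field_simp
    ring
  have hx21 : (RatFunc.X : RatFunc K) ^ 2 - 1 ≠ 0 := by
    have : (RatFunc.X : RatFunc K) ^ 2 - 1 = -(1 - RatFunc.X ^ 2) := by ring
    rw [this]
    exact neg_ne_zero.mpr hd1
  have hr₁ : s₁ (r1fun a b) = RatFunc.C (-(a * b)) + 1 - r1fun a b := by
    rw [r1fun, map_div₀]
    simp only [map_sub, map_mul, map_one, map_pow, map_neg, aux_s_C, hs₁]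
    have hnum : (1 - RatFunc.C a * RatFunc.X⁻¹) * (1 - RatFunc.C b * RatFunc.X⁻¹)
        = RatFunc.X⁻¹ ^ 2 * ((RatFunc.X - RatFunc.C a) * (RatFunc.X - RatFunc.C b)) := by
      linear_combination ((RatFunc.C a + RatFunc.C b) * RatFunc.X⁻¹
        - (1 + RatFunc.X⁻¹ * RatFunc.X)) * h2
    have hden : (1 : RatFunc K) - RatFunc.X⁻¹ ^ 2
        = RatFunc.X⁻¹ ^ 2 * (RatFunc.X ^ 2 - 1) := by
      linear_combination (-(RatFunc.X⁻¹ * RatFunc.X + 1)) * h2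
    rw [hnum, hden, mul_div_mul_left _ _ hXi2]
    field_simp
    ring
  exact ⟨hecke_key _ _ _ hinv₀ hr₀, hecke_key _ _ _ hinv₁ hr₁⟩

end
end

section
/- As K-linear operators on K(z), one has M_z ∘ (t₀·T₀⁻¹) = q·T₀ ∘ M_{z⁻¹} + (c+d)·Id, where M_z and M_{z⁻¹} denote multiplication by z and by z⁻¹ respectively. -/
noncomputable section

variable {K : Type*} [Field K]

lemma hecke_frac {F : Type*} [Field F] (x qq D T CD n a b : F)
    (hx : x ≠ 0) (hq : qq ≠ 0) (hD : D ≠ 0) :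
    qq * (T * (x⁻¹ * (a / (qq * D))) +
        n / D * (qq⁻¹ * x * (b / (qq * D)) - x⁻¹ * (a / (qq * D)))) + CD * (a / (qq * D)) =
      (T * a * qq * D + n * (x ^ 2 * b - qq * a) + CD * a * x * D) / (x * qq * D ^ 2) := by
  have e1 : (x * qq * D : F) ≠ 0 := mul_ne_zero (mul_ne_zero hx hq) hD
  have e2 : (x * qq ^ 2 * D ^ 2 : F) ≠ 0 :=
    mul_ne_zero (mul_ne_zero hx (pow_ne_zero 2 hq)) (pow_ne_zero 2 hD)
  have e3 : (qq * D : F) ≠ 0 := mul_ne_zero hq hD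
  have e4 : (x * qq * D * (x * qq ^ 2 * D ^ 2) : F) ≠ 0 := mul_ne_zero e1 e2
  have e6 : (x * qq * D ^ 2 : F) ≠ 0 := mul_ne_zero (mul_ne_zero hx hq) (pow_ne_zero 2 hD)
  have h1 : T * (x⁻¹ * (a / (qq * D))) = T * a / (x * qq * D) := by
    rw [inv_eq_one_div, div_mul_div_comm, one_mul, mul_div_assoc']
    congr 1
    ring
  have h2 : qq⁻¹ * x * (b / (qq * D)) - x⁻¹ * (a / (qq * D)) =
      (x ^ 2 * b - qq * a) / (x * qq ^ 2 * D) := by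
    have hl : qq⁻¹ * x * (b / (qq * D)) = x * b / (qq ^ 2 * D) := by
      rw [mul_assoc, ← mul_div_assoc, inv_eq_one_div, div_mul_div_comm, one_mul,
        div_eq_div_iff (mul_ne_zero hq e3) (mul_ne_zero (pow_ne_zero 2 hq) hD)]
      ring
    have hr : x⁻¹ * (a / (qq * D)) = a / (x * (qq * D)) := by
      rw [inv_eq_one_div, div_mul_div_comm, one_mul]
    rw [hl, hr, div_sub_div _ _ (mul_ne_zero (pow_ne_zero 2 hq) hD) (mul_ne_zero hx e3),
      div_eq_div_iff (mul_ne_zero (mul_ne_zero (pow_ne_zero 2 hq) hD) (mul_ne_zero hx e3))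
        (mul_ne_zero (mul_ne_zero hx (pow_ne_zero 2 hq)) hD)]
    ring
  have h3 : n / D * ((x ^ 2 * b - qq * a) / (x * qq ^ 2 * D)) =
      n * (x ^ 2 * b - qq * a) / (x * qq ^ 2 * D ^ 2) := by
    rw [div_mul_div_comm, div_eq_div_iff (mul_ne_zero hD (mul_ne_zero (mul_ne_zero hx
      (pow_ne_zero 2 hq)) hD)) e2]
    ring
  rw [h1, h2, h3, div_add_div _ _ e1 e2, ← mul_div_assoc, ← mul_div_assoc,
    div_add_div _ _ e4 e3, div_eq_div_iff (mul_ne_zero e4 e3) e6]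
  ring

set_option maxHeartbeats 1000000 in
lemma hecke_aux {F : Type*} [Field F] (x cc dd qq u v tt r sr A : F)
    (hx : x ≠ 0) (hq : qq ≠ 0) (hd : x ^ 2 - qq ≠ 0)
    (htt : tt = -(cc * dd) / qq)
    (hr : r = (x - cc) * (x - dd) / (x ^ 2 - qq))
    (hsr : sr = -((qq - cc * x) * (qq - dd * x)) / (qq * (x ^ 2 - qq)))
    (hA : A = tt * u + r * (v - u)) :
    x * (tt * u) =
      qq * (tt * (x⁻¹ * A) + r * (qq⁻¹ * x * (tt * v + sr * (u - v)) - x⁻¹ * A)) +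
        (cc + dd) * A := by
  subst htt hr hsr hA
  have e3 : (qq * (x ^ 2 - qq) : F) ≠ 0 := mul_ne_zero hq hd
  have e6 : (x * qq * (x ^ 2 - qq) ^ 2 : F) ≠ 0 :=
    mul_ne_zero (mul_ne_zero hx hq) (pow_ne_zero 2 hd)
  have hA' : -(cc * dd) / qq * u + (x - cc) * (x - dd) / (x ^ 2 - qq) * (v - u) =
      (-(cc * dd) * (x ^ 2 - qq) * u + qq * ((x - cc) * (x - dd)) * (v - u)) /
        (qq * (x ^ 2 - qq)) := by
    rw [div_mul_eq_mul_div, div_mul_eq_mul_div, div_add_div _ _ hq hd,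
      div_eq_div_iff e3 e3]
    ring
  have hB' : -(cc * dd) / qq * v +
      -((qq - cc * x) * (qq - dd * x)) / (qq * (x ^ 2 - qq)) * (u - v) =
      (-(cc * dd) * (x ^ 2 - qq) * v - (qq - cc * x) * (qq - dd * x) * (u - v)) /
        (qq * (x ^ 2 - qq)) := by
    rw [div_mul_eq_mul_div, div_mul_eq_mul_div, div_add_div _ _ hq e3,
      div_eq_div_iff (mul_ne_zero hq e3) e3]
    ring
  rw [hA', hB', hecke_frac x qq (x ^ 2 - qq) (-(cc * dd) / qq) (cc + dd)
    ((x - cc) * (x - dd))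
    (-(cc * dd) * (x ^ 2 - qq) * u + qq * ((x - cc) * (x - dd)) * (v - u))
    (-(cc * dd) * (x ^ 2 - qq) * v - (qq - cc * x) * (qq - dd * x) * (u - v)) hx hq hd,
    eq_div_iff e6]
  field_simp
  ring

/-- Commutation relation `z ∘ (t₀ T₀⁻¹) = q T₀ ∘ z⁻¹ + (c+d)` as operators on `K(z)`,
where `z`, `z⁻¹` denote the multiplication operators. -/
theorem hecke_commutation_T0 [CharZero K] (a b c d q : K)
    (hq0 : q ≠ 0) (hq1 : ∀ k : ℕ, k ≠ 0 → q ^ k ≠ 1) (hcd : c * d ≠ 0)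
    (s₀ : RatFunc K ≃ₐ[K] RatFunc K)
    (hs₀ : s₀ RatFunc.X = RatFunc.C q * RatFunc.X⁻¹)
    (T0inv : RatFunc K → RatFunc K)
    (hT0inv₁ : ∀ f, heckeT (-(c * d) / q) (r0fun c d q) s₀ (T0inv f) = f)
    (hT0inv₂ : ∀ f, T0inv (heckeT (-(c * d) / q) (r0fun c d q) s₀ f) = f) :
    ∀ f : RatFunc K,
      RatFunc.X * (RatFunc.C (-(c * d) / q) * T0inv f) =
        RatFunc.C q * heckeT (-(c * d) / q) (r0fun c d q) s₀ (RatFunc.X⁻¹ * f) +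
          RatFunc.C (c + d) * f := by
  have hX : (RatFunc.X : RatFunc K) ≠ 0 := RatFunc.X_ne_zero
  have hCq : (RatFunc.C q : RatFunc K) ≠ 0 := by
    simpa [← RatFunc.algebraMap_eq_C] using hq0
  have hsC : ∀ e : K, s₀ (RatFunc.C e) = RatFunc.C e := by
    intro e
    rw [← RatFunc.algebraMap_eq_C]
    exact s₀.commutes e
  have hsX2 : s₀ (s₀ RatFunc.X) = RatFunc.X := by
    rw [hs₀, map_mul, map_inv₀, hs₀, hsC, mul_inv, inv_inv,
      ← mul_assoc, mul_inv_cancel₀ hCq, one_mul]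
  have hP : ∀ p : Polynomial K,
      s₀ (s₀ (algebraMap (Polynomial K) (RatFunc K) p)) = algebraMap _ _ p := by
    intro p
    induction p using Polynomial.induction_on with
    | C e => rw [RatFunc.algebraMap_C, hsC, hsC]
    | add p q hp hq => rw [map_add, map_add, map_add, hp, hq]
    | monomial n e ih =>
        rw [map_mul, map_pow, RatFunc.algebraMap_C, RatFunc.algebraMap_X,
          map_mul, map_pow, map_mul, map_pow, hsC, hsC, hsX2]
  have hsinv : ∀ g : RatFunc K, s₀ (s₀ g) = g := by
    intro g
    rw [← RatFunc.num_div_denom g, map_div₀, map_div₀, hP, hP]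
  have hden : (RatFunc.X ^ 2 - RatFunc.C q : RatFunc K) ≠ 0 := by
    have : (Polynomial.X ^ 2 - Polynomial.C q : Polynomial K) ≠ 0 := by
      intro h
      have := congrArg (fun p => Polynomial.coeff p 2) h
      simp at this
    simpa [map_sub, map_pow, RatFunc.algebraMap_C, RatFunc.algebraMap_X] using
      RatFunc.algebraMap_ne_zero this
  set t : K := -(c * d) / q with ht
  have key : ∀ g : RatFunc K,
      RatFunc.X * (RatFunc.C t * g) =
        RatFunc.C q * heckeT t (r0fun c d q) s₀ (RatFunc.X⁻¹ * heckeT t (r0fun c d q) s₀ g) +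
          RatFunc.C (c + d) * heckeT t (r0fun c d q) s₀ g := by
    intro g
    have hq' : (RatFunc.C q - RatFunc.X ^ 2 : RatFunc K) ≠ 0 := by
      intro h
      apply hden
      rw [← neg_sub, h, neg_zero]
    have hfac : ((RatFunc.C q * RatFunc.X⁻¹) ^ 2 - RatFunc.C q : RatFunc K) =
        RatFunc.C q * (RatFunc.X⁻¹) ^ 2 * (RatFunc.C q - RatFunc.X ^ 2) := by
      field_simp
    have hden2 : ((RatFunc.C q * RatFunc.X⁻¹) ^ 2 - RatFunc.C q : RatFunc K) ≠ 0 := by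
      rw [hfac]
      exact mul_ne_zero (mul_ne_zero hCq (pow_ne_zero _ (inv_ne_zero hX))) hq'
    have hsr : s₀ (r0fun c d q) =
        -((RatFunc.C q - RatFunc.C c * RatFunc.X) * (RatFunc.C q - RatFunc.C d * RatFunc.X)) /
          (RatFunc.C q * (RatFunc.X ^ 2 - RatFunc.C q)) := by
      simp only [r0fun, map_div₀, map_mul, map_sub, map_pow, hs₀, hsC]
      rw [div_eq_div_iff hden2 (mul_ne_zero hCq hden)]
      field_simp
      ring
    have hsXinv : s₀ RatFunc.X⁻¹ = (RatFunc.C q)⁻¹ * RatFunc.X := by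
      rw [map_inv₀, hs₀, mul_inv, inv_inv]
    have hCt : RatFunc.C t = -(RatFunc.C c * RatFunc.C d) / RatFunc.C q := by
      rw [ht, ← RatFunc.algebraMap_eq_C, div_eq_mul_inv, map_mul, map_neg, map_mul, map_inv₀,
        div_eq_mul_inv]
    have hCcd : RatFunc.C (c + d) = RatFunc.C c + RatFunc.C d := map_add _ _ _
    have hA0 : heckeT t (r0fun c d q) s₀ g =
        RatFunc.C t * g + r0fun c d q * (s₀ g - g) := rfl
    have hsA : s₀ (RatFunc.X⁻¹ * heckeT t (r0fun c d q) s₀ g) =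
        (RatFunc.C q)⁻¹ * RatFunc.X *
          (RatFunc.C t * s₀ g + s₀ (r0fun c d q) * (g - s₀ g)) := by
      rw [map_mul, hsXinv, hA0, map_add, map_mul, map_mul, map_sub, hsC, hsinv]
    rw [show heckeT t (r0fun c d q) s₀ (RatFunc.X⁻¹ * heckeT t (r0fun c d q) s₀ g) =
          RatFunc.C t * (RatFunc.X⁻¹ * heckeT t (r0fun c d q) s₀ g) +
            r0fun c d q * (s₀ (RatFunc.X⁻¹ * heckeT t (r0fun c d q) s₀ g) -
              RatFunc.X⁻¹ * heckeT t (r0fun c d q) s₀ g) from rfl,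
      hsA, hCcd]
    exact hecke_aux RatFunc.X (RatFunc.C c) (RatFunc.C d) (RatFunc.C q) g (s₀ g)
      (RatFunc.C t) (r0fun c d q) (s₀ (r0fun c d q)) (heckeT t (r0fun c d q) s₀ g)
      hX hCq hden hCt rfl hsr hA0
  intro f
  have hgoal := key (T0inv f)
  rwa [hT0inv₁ f] at hgoal

end
end

section
/- As K-linear operators on K(z), one has (T₁ + 1) ∘ M_{z⁻¹} = t₁·M_{z⁻¹} + M_z ∘ T₁ + (a+b)·Id, where M_z and M_{z⁻¹} denote multiplication by z and by z⁻¹ respectively. -/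
noncomputable section

variable {K : Type*} [Field K]

/-- Commutation relation `(T₁ + 1) ∘ z⁻¹ = t₁ z⁻¹ + z ∘ T₁ + (a+b)` as operators on `K(z)`,
where `z`, `z⁻¹` denote the multiplication operators. -/
theorem hecke_commutation_T1_zinv [CharZero K] (a b c d q : K)
    (hq0 : q ≠ 0) (hq1 : ∀ k : ℕ, k ≠ 0 → q ^ k ≠ 1)
    (s₁ : RatFunc K ≃ₐ[K] RatFunc K)
    (hs₁ : s₁ RatFunc.X = RatFunc.X⁻¹) :
    ∀ f : RatFunc K,
      heckeT (-(a * b)) (r1fun a b) s₁ (RatFunc.X⁻¹ * f) + RatFunc.X⁻¹ * f =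
        RatFunc.C (-(a * b)) * (RatFunc.X⁻¹ * f) +
          RatFunc.X * heckeT (-(a * b)) (r1fun a b) s₁ f + RatFunc.C (a + b) * f := by
  intro f
  have hX : (RatFunc.X : RatFunc K) ≠ 0 := RatFunc.X_ne_zero
  have hden : (1 - RatFunc.X ^ 2 : RatFunc K) ≠ 0 := by
    intro h
    have h2 : (RatFunc.X ^ 2 : RatFunc K) = 1 := by linear_combination -h
    have : (Polynomial.X ^ 2 : Polynomial K) = 1 := by
      apply RatFunc.algebraMap_injective K
      simpa [RatFunc.algebraMap_X, map_pow] using h2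
    have := congrArg Polynomial.natDegree this
    simp [Polynomial.natDegree_X_pow] at this
  have hs : s₁ (RatFunc.X⁻¹ * f) = RatFunc.X * s₁ f := by
    rw [map_mul, map_inv₀, hs₁, inv_inv]
  simp only [heckeT, r1fun, hs]
  field_simp
  simp only [map_add, map_neg, map_mul]
  ring

end
end

section
/- As K-linear operators on K(z), one has (T₁ + 1) ∘ M_z = M_z + t₁·M_{z⁻¹} ∘ T₁⁻¹ − (a+b)·Id, where M_z and M_{z⁻¹} denote multiplication by z and by z⁻¹ respectively. -/
noncomputable section

variable {K : Type*} [Field K]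

/-- `s₁` is an involution, since it sends `X` to `X⁻¹`. -/
lemma ssq_aux (s₁ : RatFunc K ≃ₐ[K] RatFunc K) (hs₁ : s₁ RatFunc.X = RatFunc.X⁻¹)
    (g : RatFunc K) : s₁ (s₁ g) = g := by
  have hX' : s₁ RatFunc.X⁻¹ = RatFunc.X := by rw [map_inv₀, hs₁, inv_inv]
  have hpoly : ∀ p : Polynomial K,
      s₁ (s₁ (algebraMap (Polynomial K) (RatFunc K) p)) = algebraMap _ _ p := by
    intro p
    induction p using Polynomial.induction_on with
    | C c => simp [RatFunc.algebraMap_C, ← RatFunc.algebraMap_eq_C]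
    | add p q hp hq => simp [map_add, hp, hq]
    | monomial n c ih =>
      simp only [map_mul, map_pow, RatFunc.algebraMap_C, RatFunc.algebraMap_X,
        ← RatFunc.algebraMap_eq_C, AlgEquiv.commutes, hs₁, hX'] at ih ⊢
  induction g using RatFunc.induction_on with
  | f p q hq => rw [map_div₀, map_div₀, hpoly, hpoly]

/-- The abstract algebraic identity behind the commutation relation, stated for
arbitrary `R`, `R'` satisfying the two key relations. -/
lemma alg_id_aux (a b : K) (u v R R' : RatFunc K)
    (h1 : R + R' = 1 - RatFunc.C a * RatFunc.C b)
    (h2 : R * (RatFunc.X⁻¹ - RatFunc.X) =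
      RatFunc.X⁻¹ - (RatFunc.C a + RatFunc.C b) + RatFunc.C a * RatFunc.C b * RatFunc.X) :
    -(RatFunc.C a * RatFunc.C b) *
        (RatFunc.X * (-(RatFunc.C a * RatFunc.C b) * u + R * (v - u))) +
      R * (RatFunc.X⁻¹ * (-(RatFunc.C a * RatFunc.C b) * v + R' * (u - v)) -
        RatFunc.X * (-(RatFunc.C a * RatFunc.C b) * u + R * (v - u))) +
      RatFunc.X * (-(RatFunc.C a * RatFunc.C b) * u + R * (v - u)) =
    RatFunc.X * (-(RatFunc.C a * RatFunc.C b) * u + R * (v - u)) +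
      -(RatFunc.C a * RatFunc.C b) * (RatFunc.X⁻¹ * u) -
      (RatFunc.C a + RatFunc.C b) * (-(RatFunc.C a * RatFunc.C b) * u + R * (v - u)) := by
  linear_combination (u * (-(RatFunc.C a * RatFunc.C b) - R) + v * R) * h2 +
    (u - v) * R * RatFunc.X⁻¹ * h1

/-- Commutation relation `(T₁ + 1) ∘ z = z + t₁ z⁻¹ ∘ T₁⁻¹ - (a+b)` as operators on `K(z)`,
where `z`, `z⁻¹` denote the multiplication operators. -/
theorem hecke_commutation_T1_z [CharZero K] (a b c d q : K)
    (hq0 : q ≠ 0) (hq1 : ∀ k : ℕ, k ≠ 0 → q ^ k ≠ 1) (hab : a * b ≠ 0)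
    (s₁ : RatFunc K ≃ₐ[K] RatFunc K)
    (hs₁ : s₁ RatFunc.X = RatFunc.X⁻¹)
    (T1inv : RatFunc K → RatFunc K)
    (hT1inv₁ : ∀ f, heckeT (-(a * b)) (r1fun a b) s₁ (T1inv f) = f)
    (hT1inv₂ : ∀ f, T1inv (heckeT (-(a * b)) (r1fun a b) s₁ f) = f) :
    ∀ f : RatFunc K,
      heckeT (-(a * b)) (r1fun a b) s₁ (RatFunc.X * f) + RatFunc.X * f =
        RatFunc.X * f + RatFunc.C (-(a * b)) * (RatFunc.X⁻¹ * T1inv f) -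
          RatFunc.C (a + b) * f := by
  have hX : (RatFunc.X : RatFunc K) ≠ 0 := RatFunc.X_ne_zero
  have hX2 : (1 : RatFunc K) - RatFunc.X ^ 2 ≠ 0 := by
    have h : ((1 : Polynomial K) - Polynomial.X ^ 2) ≠ 0 := by
      intro h
      have := congrArg (fun p => Polynomial.coeff p 2) h
      simp [Polynomial.coeff_one] at this
    simpa [map_sub, map_one, map_pow, RatFunc.algebraMap_X] using
      RatFunc.algebraMap_ne_zero h
  have hCt : ∀ t : K, s₁ (RatFunc.C t) = RatFunc.C t := fun t => by
    rw [← RatFunc.algebraMap_eq_C]; exact s₁.commutes t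
  have hs2 : ∀ g, s₁ (s₁ g) = g := ssq_aux s₁ hs₁
  -- the two key relations for `R = r1fun a b` and `R' = s₁ R`
  have h1 : r1fun a b + s₁ (r1fun a b) = 1 - RatFunc.C a * RatFunc.C b := by
    have hR' : s₁ (r1fun a b) =
        (1 - RatFunc.C a * RatFunc.X⁻¹) * (1 - RatFunc.C b * RatFunc.X⁻¹) /
          (1 - RatFunc.X⁻¹ ^ 2) := by
      rw [r1fun, map_div₀]
      simp only [map_sub, map_one, map_mul, map_pow, hs₁, hCt]
    rw [hR', r1fun]
    have hX2i : (1 : RatFunc K) - RatFunc.X⁻¹ ^ 2 ≠ 0 := by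
      have e : (1 - RatFunc.X⁻¹ ^ 2 : RatFunc K) =
          (RatFunc.X ^ 2 - 1) / RatFunc.X ^ 2 := by field_simp
      rw [e]
      refine div_ne_zero ?_ (pow_ne_zero 2 hX)
      intro h
      apply hX2
      rw [← neg_sub] at h
      simpa using neg_eq_zero.mp h
    rw [div_add_div _ _ hX2 hX2i, div_eq_iff (mul_ne_zero hX2 hX2i)]
    field_simp
    ring
  have h2 : r1fun a b * (RatFunc.X⁻¹ - RatFunc.X) =
      RatFunc.X⁻¹ - (RatFunc.C a + RatFunc.C b) + RatFunc.C a * RatFunc.C b * RatFunc.X := by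
    rw [r1fun, div_mul_eq_mul_div, div_eq_iff hX2]
    field_simp
    ring
  intro f
  have hg := hT1inv₁ f
  rw [← hg, hT1inv₂]
  set g := T1inv f with hgdef
  have key : s₁ (RatFunc.X * (RatFunc.C (-(a * b)) * g + r1fun a b * (s₁ g - g))) =
      RatFunc.X⁻¹ * (RatFunc.C (-(a * b)) * s₁ g + s₁ (r1fun a b) * (g - s₁ g)) := by
    simp [map_mul, map_add, map_sub, hs₁, hs2, hCt]
  simp only [heckeT]
  rw [key]
  simp only [map_neg, map_mul, map_add]
  exact alg_id_aux a b g (s₁ g) (r1fun a b) (s₁ (r1fun a b)) h1 h2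

end
end

section
/- For every Laurent polynomial g ∈ K[z, z⁻¹], the element (T₁ + 1)g of K(z) is again a Laurent polynomial, and it is symmetric under z ↦ z⁻¹, i.e. s₁((T₁+1)g) = (T₁+1)g. -/
noncomputable section

variable {K : Type*} [Field K]

/-- `f ∈ K(z)` is a Laurent polynomial, i.e. lies in `K[z, z⁻¹] ⊆ K(z)`. -/
def IsLaurent (f : RatFunc K) : Prop :=
  ∃ (p : Polynomial K) (m : ℕ),
    f * RatFunc.X ^ m = algebraMap (Polynomial K) (RatFunc K) p

namespace HeckeAux

open Polynomial

lemma algMap_eq_aeval (p : K[X]) :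
    algebraMap K[X] (RatFunc K) p = Polynomial.aeval RatFunc.X p := by
  have h : (IsScalarTower.toAlgHom K K[X] (RatFunc K)) =
      (Polynomial.aeval (RatFunc.X : RatFunc K)) :=
    Polynomial.algHom_ext (by simp [RatFunc.algebraMap_X])
  exact DFunLike.congr_fun h p

lemma s1_algebraMap (s₁ : RatFunc K ≃ₐ[K] RatFunc K) (p : K[X]) :
    s₁ (algebraMap K[X] (RatFunc K) p) = Polynomial.aeval (s₁ RatFunc.X) p := by
  rw [algMap_eq_aeval, ← Polynomial.aeval_algHom_apply s₁ RatFunc.X p]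

lemma s1_invol (s₁ : RatFunc K ≃ₐ[K] RatFunc K)
    (hs₁ : s₁ RatFunc.X = RatFunc.X⁻¹) (f : RatFunc K) : s₁ (s₁ f) = f := by
  have hX : s₁ (s₁ (RatFunc.X : RatFunc K)) = RatFunc.X := by
    rw [hs₁, map_inv₀, hs₁, inv_inv]
  induction f using RatFunc.induction_on with
  | f p q hq =>
    rw [map_div₀, map_div₀, s1_algebraMap, s1_algebraMap,
      ← Polynomial.aeval_algHom_apply s₁ (s₁ RatFunc.X) p,
      ← Polynomial.aeval_algHom_apply s₁ (s₁ RatFunc.X) q, hX,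
      ← algMap_eq_aeval, ← algMap_eq_aeval]

/-- auxiliary reversed polynomial -/
def revP (p : K[X]) (n : ℕ) : K[X] :=
  ∑ i ∈ Finset.range (n+1), Polynomial.C (p.coeff i) * Polynomial.X ^ (n - i)

lemma aeval_inv_mul (p : K[X]) (n : ℕ) (hn : p.natDegree < n + 1) :
    Polynomial.aeval (RatFunc.X⁻¹ : RatFunc K) p * RatFunc.X ^ n
      = algebraMap K[X] (RatFunc K) (revP p n) := by
  rw [Polynomial.aeval_eq_sum_range' hn, revP, map_sum, Finset.sum_mul]
  refine Finset.sum_congr rfl fun i hi => ?_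
  rw [Finset.mem_range] at hi
  have hXi : (RatFunc.X : RatFunc K) ^ i ≠ 0 := pow_ne_zero _ RatFunc.X_ne_zero
  have hsplit : (RatFunc.X : RatFunc K) ^ n = RatFunc.X ^ i * RatFunc.X ^ (n - i) := by
    rw [← pow_add]
    congr 1
    omega
  rw [map_mul, map_pow, RatFunc.algebraMap_C, RatFunc.algebraMap_X,
    RatFunc.smul_eq_C_mul, hsplit, inv_pow, mul_assoc, ← mul_assoc (RatFunc.X ^ i)⁻¹,
    inv_mul_cancel₀ hXi, one_mul]

lemma revP_eval_one (p : K[X]) (n : ℕ) (hn : p.natDegree < n + 1) :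
    (revP p n).eval 1 = p.eval 1 := by
  rw [revP, Polynomial.eval_finset_sum, Polynomial.eval_eq_sum_range' hn]
  exact Finset.sum_congr rfl fun i hi => by simp

lemma revP_eval_negone (p : K[X]) (n : ℕ) (hn : p.natDegree < n + 1) :
    (revP p n).eval (-1) = (-1)^n * p.eval (-1) := by
  rw [revP, Polynomial.eval_finset_sum, Polynomial.eval_eq_sum_range' hn, Finset.mul_sum]
  refine Finset.sum_congr rfl fun i hi => ?_
  rw [Finset.mem_range] at hi
  have h : ((-1:K))^(n-i) * (-1)^i = (-1)^n := by rw [← pow_add]; congr 1; omega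
  have h2 : ((-1:K))^i * (-1)^i = 1 := by
    rw [← pow_add, ← two_mul, pow_mul]; norm_num
  simp only [Polynomial.eval_mul, Polynomial.eval_C, Polynomial.eval_pow, Polynomial.eval_X]
  calc p.coeff i * (-1:K)^(n-i) = p.coeff i * ((-1)^(n-i) * ((-1)^i * (-1)^i)) := by rw [h2]; ring
  _ = (-1)^n * (p.coeff i * (-1)^i) := by
        rw [show ((-1:K))^(n-i) * ((-1:K)^i * (-1:K)^i) = ((-1:K)^(n-i) * (-1:K)^i) * (-1:K)^i by ring, h]
        ring

lemma one_sub_X_sq_ne : (1 : RatFunc K) - RatFunc.X ^ 2 ≠ 0 := by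
  have hp : (1 - Polynomial.X ^ 2 : K[X]) ≠ 0 := by
    intro h
    have := congrArg (fun r => Polynomial.coeff r 2) h
    simp [Polynomial.coeff_one] at this
  have := RatFunc.algebraMap_ne_zero (K := K) hp
  rwa [map_sub, map_one, map_pow, RatFunc.algebraMap_X] at this

lemma s1_C (s₁ : RatFunc K ≃ₐ[K] RatFunc K) (t : K) : s₁ (RatFunc.C t) = RatFunc.C t := by
  rw [← RatFunc.algebraMap_eq_C]
  exact s₁.commutes t

lemma s1_r1 (a b : K) (s₁ : RatFunc K ≃ₐ[K] RatFunc K)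
    (hs₁ : s₁ RatFunc.X = RatFunc.X⁻¹) :
    s₁ (r1fun a b) = RatFunc.C (1 - a * b) - r1fun a b := by
  have hX : (RatFunc.X : RatFunc K) ≠ 0 := RatFunc.X_ne_zero
  have h2 : (1 : RatFunc K) - RatFunc.X ^ 2 ≠ 0 := one_sub_X_sq_ne
  unfold r1fun
  simp only [map_div₀, map_mul, map_sub, map_one, map_pow, hs₁, s1_C]
  have h3 : (RatFunc.X : RatFunc K)⁻¹ ^ 2 - 1 ≠ 0 := by
    intro h
    apply h2
    have := congrArg (fun y => y * RatFunc.X ^ 2) h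
    simp only [sub_mul, one_mul, zero_mul, inv_pow, inv_mul_cancel₀ (pow_ne_zero 2 hX)] at this
    linear_combination this
  rw [show (1 : RatFunc K) - RatFunc.X⁻¹ ^ 2 = -(RatFunc.X⁻¹^2 - 1) by ring,
    div_neg, neg_eq_iff_eq_neg, div_eq_iff h3]
  field_simp
  ring

lemma coprime_dvd {Q : K[X]} [CharZero K] (h1 : Q.eval 1 = 0) (h2 : Q.eval (-1) = 0) :
    (Polynomial.X ^ 2 - 1 : K[X]) ∣ Q := by
  have d1 : (Polynomial.X - Polynomial.C (1:K)) ∣ Q :=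
    (Polynomial.dvd_iff_isRoot).mpr h1
  have d2 : (Polynomial.X - Polynomial.C (-1:K)) ∣ Q :=
    (Polynomial.dvd_iff_isRoot).mpr h2
  have hco : IsCoprime (Polynomial.X - Polynomial.C (1:K))
      (Polynomial.X - Polynomial.C (-1:K)) := by
    apply Polynomial.isCoprime_X_sub_C_of_isUnit_sub
    norm_num
  have := hco.mul_dvd d1 d2
  have heq : (Polynomial.X - Polynomial.C (1:K)) * (Polynomial.X - Polynomial.C (-1:K))
      = Polynomial.X ^ 2 - 1 := by
    simp only [Polynomial.C_neg, Polynomial.C_1]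
    ring
  rwa [heq] at this

end HeckeAux

open HeckeAux Polynomial in
/-- For any Laurent polynomial `g`, the element `(T₁ + 1) g` is again a Laurent polynomial,
and it is symmetric under `z ↦ z⁻¹`. -/
theorem hecke_T1_plus_one_symmetrizes [CharZero K] (a b c d q : K)
    (hq0 : q ≠ 0) (hq1 : ∀ k : ℕ, k ≠ 0 → q ^ k ≠ 1)
    (s₁ : RatFunc K ≃ₐ[K] RatFunc K)
    (hs₁ : s₁ RatFunc.X = RatFunc.X⁻¹) :
    ∀ g : RatFunc K, IsLaurent g →
      IsLaurent (heckeT (-(a * b)) (r1fun a b) s₁ g + g) ∧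
        s₁ (heckeT (-(a * b)) (r1fun a b) s₁ g + g) =
          heckeT (-(a * b)) (r1fun a b) s₁ g + g := by
  intro g hg
  obtain ⟨p, m, hp⟩ := hg
  have hX : (RatFunc.X : RatFunc K) ≠ 0 := RatFunc.X_ne_zero
  have hXm : (RatFunc.X : RatFunc K) ^ m ≠ 0 := pow_ne_zero _ hX
  set n := p.natDegree with hn
  have hnlt : p.natDegree < n + 1 := by omega
  have hXN : (RatFunc.X : RatFunc K) ^ (n + m) ≠ 0 := pow_ne_zero _ hX
  have h2 : (1 : RatFunc K) - RatFunc.X ^ 2 ≠ 0 := one_sub_X_sq_ne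
  have hg_eq : g = algebraMap K[X] (RatFunc K) p / RatFunc.X ^ m :=
    (eq_div_iff hXm).mpr hp
  have hs1g : s₁ g = Polynomial.aeval (RatFunc.X⁻¹ : RatFunc K) p * RatFunc.X ^ m := by
    rw [hg_eq, map_div₀, s1_algebraMap, hs₁, map_pow, hs₁, inv_pow, div_eq_mul_inv, inv_inv]
  -- e1 : s₁ g times X^(n+m)
  have e1 : s₁ g * RatFunc.X ^ (n + m)
      = algebraMap K[X] (RatFunc K) (revP p n * Polynomial.X ^ (2 * m)) := by
    have step : s₁ g * RatFunc.X ^ (n + m)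
        = (Polynomial.aeval (RatFunc.X⁻¹ : RatFunc K) p * RatFunc.X ^ n)
            * RatFunc.X ^ (2 * m) := by
      rw [hs1g]; ring
    rw [step, aeval_inv_mul p n hnlt, map_mul, map_pow, RatFunc.algebraMap_X]
  have e2 : g * RatFunc.X ^ (n + m)
      = algebraMap K[X] (RatFunc K) (p * Polynomial.X ^ n) := by
    have step : g * RatFunc.X ^ (n + m) = (g * RatFunc.X ^ m) * RatFunc.X ^ n := by ring
    rw [step, hp, map_mul, map_pow, RatFunc.algebraMap_X]
  set Q : K[X] := revP p n * Polynomial.X ^ (2 * m) - p * Polynomial.X ^ n with hQdef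
  have hQ : (s₁ g - g) * RatFunc.X ^ (n + m) = algebraMap K[X] (RatFunc K) Q := by
    rw [sub_mul, e1, e2, ← map_sub]
  have hQ1 : Q.eval 1 = 0 := by
    simp [hQdef, revP_eval_one p n hnlt]
  have hQ2 : Q.eval (-1) = 0 := by
    have hpm : ((-1:K)) ^ (2 * m) = 1 := by
      rw [pow_mul]; norm_num
    simp only [hQdef, Polynomial.eval_sub, Polynomial.eval_mul, Polynomial.eval_pow,
      Polynomial.eval_X, revP_eval_negone p n hnlt, hpm, mul_one]
    ring
  obtain ⟨S, hS⟩ := coprime_dvd hQ1 hQ2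
  -- e3 : main Laurent computation for r₁·(s₁ g - g)
  have e3 : r1fun a b * (s₁ g - g) * RatFunc.X ^ (n + m)
      = algebraMap K[X] (RatFunc K)
          (-((1 - Polynomial.C a * Polynomial.X) * (1 - Polynomial.C b * Polynomial.X) * S)) := by
    rw [mul_assoc, hQ, hS]
    unfold r1fun
    rw [div_mul_eq_mul_div, div_eq_iff h2]
    simp only [map_mul, map_sub, map_neg, map_one, map_pow, RatFunc.algebraMap_X,
      RatFunc.algebraMap_C]
    ring
  constructor
  · -- Laurent-ness
    refine ⟨Polynomial.C (-(a*b)) * (p * Polynomial.X ^ n)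
        + (-((1 - Polynomial.C a * Polynomial.X) * (1 - Polynomial.C b * Polynomial.X) * S))
        + p * Polynomial.X ^ n, n + m, ?_⟩
    unfold heckeT
    rw [add_mul, add_mul, mul_assoc, e2, e3]
    simp only [map_add, map_mul, map_neg, map_sub, map_one, map_pow,
      RatFunc.algebraMap_C, RatFunc.algebraMap_X]
  · -- symmetry
    have hssg : s₁ (s₁ g) = g := s1_invol s₁ hs₁ g
    unfold heckeT
    rw [map_add, map_add, map_mul, map_mul, map_sub, hssg, s1_C, s1_r1 a b s₁ hs₁,
      show RatFunc.C (1 - a * b) = 1 - RatFunc.C (a * b) by rw [map_sub, map_one],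
      show RatFunc.C (-(a * b)) = -RatFunc.C (a * b) by rw [map_neg]]
    ring

end
end

section
/- The modified Askey–Wilson operator admits the Hecke-algebra factorization D′ = (T₁ + 1)(T₀ − t₀) as K-linear operators on K(z). -/
noncomputable section

variable {K : Type*} [Field K]

/-- The rational function `A(z)`. -/
def Afun (a b c d q : K) : RatFunc K :=
  (1 - RatFunc.C a * RatFunc.X) * (1 - RatFunc.C b * RatFunc.X) *
      (1 - RatFunc.C c * RatFunc.X) * (1 - RatFunc.C d * RatFunc.X) /
    ((1 - RatFunc.X ^ 2) * (1 - RatFunc.C q * RatFunc.X ^ 2))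

/-- The rational function `A(z⁻¹)`, obtained from `A(z)` by substituting `z⁻¹` for `z`. -/
def AfunInv (a b c d q : K) : RatFunc K :=
  (1 - RatFunc.C a * RatFunc.X⁻¹) * (1 - RatFunc.C b * RatFunc.X⁻¹) *
      (1 - RatFunc.C c * RatFunc.X⁻¹) * (1 - RatFunc.C d * RatFunc.X⁻¹) /
    ((1 - RatFunc.X⁻¹ ^ 2) * (1 - RatFunc.C q * RatFunc.X⁻¹ ^ 2))

/-- The Askey–Wilson operator `D = A(z)(T_q - 1) + A(z⁻¹)(T_{q⁻¹} - 1)`. -/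
def Dop (a b c d q : K) (Tq Tqi : RatFunc K → RatFunc K) (f : RatFunc K) : RatFunc K :=
  Afun a b c d q * (Tq f - f) + AfunInv a b c d q * (Tqi f - f)

/-- The modified Askey–Wilson operator `D' = A(z)(T_q - s₁) + A(z⁻¹)(T_{q⁻¹} s₁ - 1)`. -/
def DopM (a b c d q : K) (Tq Tqi s1 : RatFunc K → RatFunc K) (f : RatFunc K) : RatFunc K :=
  Afun a b c d q * (Tq f - s1 f) + AfunInv a b c d q * (Tqi (s1 f) - f)

lemma aw_map_C (e : RatFunc K ≃ₐ[K] RatFunc K) (a : K) :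
    e (RatFunc.C a) = RatFunc.C a := by
  have := e.commutes a
  rwa [RatFunc.algebraMap_eq_C] at this

lemma aw_algEquiv_ext {e₁ e₂ : RatFunc K ≃ₐ[K] RatFunc K}
    (h : e₁ RatFunc.X = e₂ RatFunc.X) : ∀ f, e₁ f = e₂ f := by
  suffices h' : (e₁ : RatFunc K →+* RatFunc K) = e₂ from fun f => RingHom.congr_fun h' f
  apply IsLocalization.ringHom_ext (nonZeroDivisors (Polynomial K))
  apply Polynomial.ringHom_ext
  · intro a
    simp only [RingHom.coe_comp, Function.comp_apply, RatFunc.algebraMap_C]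
    exact (aw_map_C e₁ a).trans (aw_map_C e₂ a).symm
  · simpa [RatFunc.algebraMap_X] using h

lemma aw_ne₁ : (1 : RatFunc K) - RatFunc.X ^ 2 ≠ 0 := by
  have h : (1 : RatFunc K) - RatFunc.X ^ 2 =
      algebraMap (Polynomial K) (RatFunc K) (1 - Polynomial.X ^ 2) := by
    simp [map_sub, map_pow, RatFunc.algebraMap_X]
  rw [h]
  apply RatFunc.algebraMap_ne_zero
  intro h2
  simpa [Polynomial.coeff_one] using congrArg (fun p => Polynomial.coeff p 2) h2

lemma aw_ne₂ (q : K) : (1 : RatFunc K) - RatFunc.C q * RatFunc.X ^ 2 ≠ 0 := by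
  have h : (1 : RatFunc K) - RatFunc.C q * RatFunc.X ^ 2 =
      algebraMap (Polynomial K) (RatFunc K) (1 - Polynomial.C q * Polynomial.X ^ 2) := by
    simp [map_sub, map_mul, map_pow, RatFunc.algebraMap_X, RatFunc.algebraMap_C]
  rw [h]
  apply RatFunc.algebraMap_ne_zero
  intro h2
  simpa [Polynomial.coeff_one] using congrArg (fun p => Polynomial.coeff p 0) h2

lemma aw_ne₃ (q : K) : (RatFunc.X : RatFunc K) ^ 2 - RatFunc.C q ≠ 0 := by
  have h : (RatFunc.X : RatFunc K) ^ 2 - RatFunc.C q =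
      algebraMap (Polynomial K) (RatFunc K) (Polynomial.X ^ 2 - Polynomial.C q) := by
    simp [map_sub, map_pow, RatFunc.algebraMap_X, RatFunc.algebraMap_C]
  rw [h]
  apply RatFunc.algebraMap_ne_zero
  intro h2
  simpa [Polynomial.coeff_one] using congrArg (fun p => Polynomial.coeff p 2) h2

lemma aw_ne₄ : (RatFunc.X : RatFunc K) ^ 2 - 1 ≠ 0 := by
  intro h
  apply aw_ne₁ (K := K)
  rw [show (1 : RatFunc K) - RatFunc.X ^ 2 = -(RatFunc.X ^ 2 - 1) by ring, h, neg_zero]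

lemma awA (x : K) :
    (RatFunc.X⁻¹ : RatFunc K) - RatFunc.C x = (1 - RatFunc.C x * RatFunc.X) / RatFunc.X := by
  rw [eq_div_iff RatFunc.X_ne_zero, sub_mul, inv_mul_cancel₀ RatFunc.X_ne_zero]

lemma awB (x : K) :
    (1 : RatFunc K) - RatFunc.C x * RatFunc.X⁻¹ = (RatFunc.X - RatFunc.C x) / RatFunc.X := by
  rw [eq_div_iff RatFunc.X_ne_zero, sub_mul, one_mul, mul_assoc,
    inv_mul_cancel₀ RatFunc.X_ne_zero, mul_one]

lemma awC (q : K) :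
    (RatFunc.X⁻¹ : RatFunc K) ^ 2 - RatFunc.C q
      = (1 - RatFunc.C q * RatFunc.X ^ 2) / RatFunc.X ^ 2 := by
  rw [eq_div_iff (pow_ne_zero 2 RatFunc.X_ne_zero), sub_mul, inv_pow,
    inv_mul_cancel₀ (pow_ne_zero 2 RatFunc.X_ne_zero)]

lemma awD : (1 : RatFunc K) - RatFunc.X⁻¹ ^ 2 = (RatFunc.X ^ 2 - 1) / RatFunc.X ^ 2 := by
  rw [eq_div_iff (pow_ne_zero 2 RatFunc.X_ne_zero), sub_mul, one_mul, inv_pow,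
    inv_mul_cancel₀ (pow_ne_zero 2 RatFunc.X_ne_zero)]

lemma awE (q : K) :
    (1 : RatFunc K) - RatFunc.C q * RatFunc.X⁻¹ ^ 2
      = (RatFunc.X ^ 2 - RatFunc.C q) / RatFunc.X ^ 2 := by
  rw [eq_div_iff (pow_ne_zero 2 RatFunc.X_ne_zero), sub_mul, one_mul, mul_assoc, inv_pow,
    inv_mul_cancel₀ (pow_ne_zero 2 RatFunc.X_ne_zero), mul_one]


set_option maxHeartbeats 1600000 in
set_option maxRecDepth 8000 in
/-- Hecke-algebra factorization of the modified Askey–Wilson operator: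
`D' = (T₁ + 1)(T₀ - t₀)` as operators on `K(z)`. -/
theorem modified_AW_operator_factorization [CharZero K] (a b c d q : K)
    (hq0 : q ≠ 0) (hq1 : ∀ k : ℕ, k ≠ 0 → q ^ k ≠ 1)
    (Tq Tqi s₀ s₁ : RatFunc K ≃ₐ[K] RatFunc K)
    (hTq : Tq RatFunc.X = RatFunc.C q * RatFunc.X)
    (hTqi : Tqi RatFunc.X = RatFunc.C q⁻¹ * RatFunc.X)
    (hs₀ : s₀ RatFunc.X = RatFunc.C q * RatFunc.X⁻¹)
    (hs₁ : s₁ RatFunc.X = RatFunc.X⁻¹) :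
    ∀ f : RatFunc K,
      DopM a b c d q Tq Tqi s₁ f =
        heckeT (-(a * b)) (r1fun a b) s₁
            (heckeT (-(c * d) / q) (r0fun c d q) s₀ f - RatFunc.C (-(c * d) / q) * f) +
          (heckeT (-(c * d) / q) (r0fun c d q) s₀ f - RatFunc.C (-(c * d) / q) * f) := by
  intro f
  have hX : (RatFunc.X : RatFunc K) ≠ 0 := RatFunc.X_ne_zero
  have h1 : ∀ g, s₁ (s₀ g) = Tq g := by
    have : (s₀.trans s₁) RatFunc.X = Tq RatFunc.X := by
      simp only [AlgEquiv.trans_apply, hs₀, map_mul, aw_map_C, map_inv₀, hs₁, inv_inv, hTq]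
    exact fun g => aw_algEquiv_ext this g
  have h2 : Tqi (s₁ f) = s₀ f := by
    have : (s₁.trans Tqi) RatFunc.X = s₀ RatFunc.X := by
      rw [AlgEquiv.trans_apply, hs₁, map_inv₀, hTqi, hs₀, mul_inv,
        show (RatFunc.C q⁻¹ : RatFunc K) = (RatFunc.C q)⁻¹ from map_inv₀ RatFunc.C q,
        inv_inv]
    exact aw_algEquiv_ext this f
  have hg : heckeT (-(c * d) / q) (r0fun c d q) s₀ f - RatFunc.C (-(c * d) / q) * f
      = r0fun c d q * (s₀ f - f) := by
    unfold heckeT; ring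
  rw [hg]
  unfold heckeT DopM
  rw [map_mul, map_sub, h1 f, h2]
  have key1 : Afun a b c d q = r1fun a b * s₁ (r0fun c d q) := by
    unfold Afun r1fun r0fun
    rw [map_div₀, map_mul, map_sub, map_sub, map_sub, map_pow, hs₁,
      aw_map_C s₁ c, aw_map_C s₁ d, aw_map_C s₁ q]
    rw [awA c, awA d, awC q]
    have comb : (1 - RatFunc.C c * RatFunc.X) / RatFunc.X
          * ((1 - RatFunc.C d * RatFunc.X) / RatFunc.X)
          / ((1 - RatFunc.C q * RatFunc.X ^ 2) / RatFunc.X ^ 2)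
        = (1 - RatFunc.C c * RatFunc.X) * (1 - RatFunc.C d * RatFunc.X)
          / (1 - RatFunc.C q * RatFunc.X ^ 2) := by
      rw [div_mul_div_comm, div_div_div_eq]
      rw [div_eq_div_iff (mul_ne_zero (mul_ne_zero hX hX) (aw_ne₂ q)) (aw_ne₂ q)]
      ring
    rw [comb, div_mul_div_comm]
    ring
  have key2 : AfunInv a b c d q
      = r0fun c d q * (RatFunc.C (-(a * b)) + 1 - r1fun a b) := by
    unfold AfunInv r0fun r1fun
    rw [map_neg, map_mul, awB a, awB b, awB c, awB d, awD, awE q]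
    rw [div_mul_div_comm, div_mul_div_comm, div_mul_div_comm, div_mul_div_comm,
      div_div_div_eq]
    have hsum : -(RatFunc.C a * RatFunc.C b) + 1
          - (1 - RatFunc.C a * RatFunc.X) * (1 - RatFunc.C b * RatFunc.X) / (1 - RatFunc.X ^ 2)
        = ((-(RatFunc.C a * RatFunc.C b) + 1) * (1 - RatFunc.X ^ 2)
            - (1 - RatFunc.C a * RatFunc.X) * (1 - RatFunc.C b * RatFunc.X))
          / (1 - RatFunc.X ^ 2) := by
      rw [eq_div_iff aw_ne₁, sub_mul, div_mul_cancel₀ _ aw_ne₁]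
    rw [hsum, div_mul_div_comm]
    rw [div_eq_div_iff
      (mul_ne_zero (mul_ne_zero (mul_ne_zero (mul_ne_zero hX hX) hX) hX)
        (mul_ne_zero aw_ne₄ (aw_ne₃ q)))
      (mul_ne_zero (aw_ne₃ q) aw_ne₁)]
    ring
  rw [key1, key2]
  ring

end
end
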